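/- Let P_Z and Q_Z be probability vectors on a finite alphabet A_Z, X a random variable related to Z via a memoryless channel with invertible matrix Π and true marginal P_Z. Let X̂_B^{Q}(z) = X̂_B(Π(·,z) ⊙ (Π^{-T} Q_Z)) be the mismatched Bayes filter. Then E[Λ(X, X̂_B^{Q_Z}(Z))] − E[Λ(X, X̂_B^{P_Z}(Z))] ≤ Λ_max · |Π^{-T}|_max · |A_X| · ‖P_Z − Q_Z‖₁. -/

import Mathlib

/-!
Fix an observation `z`. The mismatched filter picks the action that is Bayes-optimal for the
weights `K(·,z) ⊙ K^{-T} q` instead of the true weights `K(·,z) ⊙ K^{-T} p`. Against the assumed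
weights it does no worse than any other action, so its excess loss against the true weights is at
most `Λmax` times the `ℓ¹` distance between the two weight vectors. Summing over `z`, the row sums
of `K` collapse this to `Λmax ‖K^{-T} (p - q)‖₁`, and each entry of `K^{-T} (p - q)` is at most
`|K^{-T}|_max ‖p - q‖₁` in absolute value.
-/

open Finset Matrix

noncomputable section

/-- Maximal absolute entry of a matrix. -/
def matMaxAbs {α : Type} [Fintype α] [Nonempty α] (M : Matrix α α ℝ) : ℝ :=
  ⨆ p : α × α, |M p.1 p.2|

/-- The mismatched Bayes filter `X̂_B^{q}(z) = X̂_B(K(·,z) ⊙ (K^{-T} q))`. -/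
def hadFilter {α : Type} [Fintype α] [DecidableEq α]
    (K : Matrix α α ℝ) (XB : (α → ℝ) → α) (q : α → ℝ) (zt : α) : α :=
  XB (fun a => K a zt * Matrix.mulVec (K⁻¹)ᵀ q a)

theorem abs_le_matMaxAbs {α : Type} [Fintype α] [Nonempty α] (M : Matrix α α ℝ) (a b : α) :
    |M a b| ≤ matMaxAbs M :=
  le_ciSup (f := fun p : α × α => |M p.1 p.2|) (Set.finite_range _).bddAbove (a, b)

theorem sum_abs_mulVec_le_matMaxAbs {α : Type} [Fintype α] [Nonempty α]
    (M : Matrix α α ℝ) (v : α → ℝ) :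
    ∑ x, |(M *ᵥ v) x| ≤ Fintype.card α * (matMaxAbs M * ∑ z, |v z|) := by
  have hentry : ∀ x, |(M *ᵥ v) x| ≤ matMaxAbs M * ∑ z, |v z| := fun x =>
    calc |(M *ᵥ v) x| ≤ ∑ z, |M x z * v z| := abs_sum_le_sum_abs _ _
      _ = ∑ z, |M x z| * |v z| := by simp only [abs_mul]
      _ ≤ ∑ z, matMaxAbs M * |v z| :=
          sum_le_sum fun z _ => mul_le_mul_of_nonneg_right (abs_le_matMaxAbs M x z) (abs_nonneg _)
      _ = matMaxAbs M * ∑ z, |v z| := (mul_sum _ _ _).symm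
  simpa using sum_le_sum fun x (_ : x ∈ univ) => hentry x

theorem sum_mul_loss_sub_le_of_optimal {ι β : Type*} [Fintype ι] (L : ι → β → ℝ) (c : ℝ)
    (hL0 : ∀ i b, 0 ≤ L i b) (hLc : ∀ i b, L i b ≤ c) (w w' : ι → ℝ) (a b : β)
    (ha : ∑ i, L i a * w' i ≤ ∑ i, L i b * w' i) :
    ∑ i, w i * (L i a - L i b) ≤ c * ∑ i, |w i - w' i| := by
  have hsplit : ∑ i, w i * (L i a - L i b)
      = (∑ i, L i a * w' i - ∑ i, L i b * w' i) + ∑ i, (w i - w' i) * (L i a - L i b) := by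
    simp only [← sum_sub_distrib, ← sum_add_distrib]
    exact sum_congr rfl fun i _ => by ring
  have hterm : ∀ i, (w i - w' i) * (L i a - L i b) ≤ c * |w i - w' i| := fun i =>
    calc (w i - w' i) * (L i a - L i b) ≤ |w i - w' i| * |L i a - L i b| := by
          rw [← abs_mul]; exact le_abs_self _
      _ ≤ |w i - w' i| * c := mul_le_mul_of_nonneg_left
          (abs_sub_le_of_nonneg_of_le (hL0 i a) (hLc i a) (hL0 i b) (hLc i b)) (abs_nonneg _)
      _ = c * |w i - w' i| := mul_comm _ _
  rw [hsplit, mul_sum]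
  linarith [sum_le_sum fun i (_ : i ∈ univ) => hterm i]

theorem sum_sum_mul_eq_sum_of_row_sum_one {α : Type} [Fintype α] (K : Matrix α α ℝ)
    (hKrow : ∀ a, ∑ b, K a b = 1) (f : α → ℝ) :
    ∑ z, ∑ x, K x z * f x = ∑ x, f x := by
  rw [sum_comm]
  exact sum_congr rfl fun x _ => by rw [← sum_mul, hKrow x, one_mul]

theorem mismatched_filter_single_letter_bound_general
    {α : Type} [Fintype α] [DecidableEq α] [Nonempty α]
    (K : Matrix α α ℝ) (hK0 : ∀ a b, 0 ≤ K a b) (hKrow : ∀ a, ∑ b, K a b = 1)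
    (pZ : α → ℝ)
    (qZ : α → ℝ)
    (Λ : α → α → ℝ) (Λmax : ℝ)
    (hΛ0 : ∀ i j, 0 ≤ Λ i j) (hΛmax : ∀ i j, Λ i j ≤ Λmax)
    (XB : (α → ℝ) → α)
    (hXB : ∀ v : α → ℝ, ∀ j : α, ∑ i, Λ i (XB v) * v i ≤ ∑ i, Λ i j * v i) :
    ∑ x : α, ∑ z : α, (Matrix.mulVec (K⁻¹)ᵀ pZ x * K x z) *
        (Λ x (hadFilter K XB qZ z) - Λ x (hadFilter K XB pZ z))
      ≤ Λmax * matMaxAbs (K⁻¹)ᵀ * (Fintype.card α : ℝ) * ∑ z, |pZ z - qZ z| := by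
  obtain ⟨a₀⟩ := ‹Nonempty α›
  have hΛmax0 : 0 ≤ Λmax := (hΛ0 a₀ a₀).trans (hΛmax a₀ a₀)
  have hletter : ∀ z, ∑ x, ((K⁻¹)ᵀ *ᵥ pZ) x * K x z *
      (Λ x (hadFilter K XB qZ z) - Λ x (hadFilter K XB pZ z))
      ≤ Λmax * ∑ x, K x z * |((K⁻¹)ᵀ *ᵥ (pZ - qZ)) x| := fun z => by
    refine (sum_mul_loss_sub_le_of_optimal Λ Λmax hΛ0 hΛmax _
      (fun x => K x z * ((K⁻¹)ᵀ *ᵥ qZ) x) _ _ (hXB _ _)).trans_eq ?_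
    congr 1
    refine sum_congr rfl fun x _ => ?_
    rw [mulVec_sub, Pi.sub_apply, mul_comm _ (K x z), ← mul_sub, abs_mul, abs_of_nonneg (hK0 x z)]
  calc _ = ∑ z, ∑ x, ((K⁻¹)ᵀ *ᵥ pZ) x * K x z *
        (Λ x (hadFilter K XB qZ z) - Λ x (hadFilter K XB pZ z)) := sum_comm
    _ ≤ ∑ z, Λmax * ∑ x, K x z * |((K⁻¹)ᵀ *ᵥ (pZ - qZ)) x| := sum_le_sum fun z _ => hletter z
    _ = Λmax * ∑ x, |((K⁻¹)ᵀ *ᵥ (pZ - qZ)) x| := by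
        rw [← mul_sum, sum_sum_mul_eq_sum_of_row_sum_one K hKrow]
    _ ≤ Λmax * (Fintype.card α * (matMaxAbs (K⁻¹)ᵀ * ∑ z, |(pZ - qZ) z|)) :=
        mul_le_mul_of_nonneg_left (sum_abs_mulVec_le_matMaxAbs _ _) hΛmax0
    _ = _ := by simp only [Pi.sub_apply]; ring

/-- Let `pZ, qZ` be probability vectors, `X` related to `Z` via a
memoryless channel with invertible `K` and true marginal `pZ` (so
`P_X = K^{-T} pZ` and `P(X = x, Z = z) = P_X(x) K(x,z)`). Then
`E[Λ(X, X̂_B^{qZ}(Z))] − E[Λ(X, X̂_B^{pZ}(Z))] ≤ Λmax |K^{-T}|_max |A_X| ‖pZ − qZ‖₁`. -/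
theorem mismatched_filter_single_letter_bound
    {α : Type} [Fintype α] [DecidableEq α] [Nonempty α]
    (K : Matrix α α ℝ) (hK0 : ∀ a b, 0 ≤ K a b) (hKrow : ∀ a, ∑ b, K a b = 1)
    (hKdet : IsUnit K.det)
    (pZ : α → ℝ) (hpZ0 : ∀ z, 0 ≤ pZ z) (hpZ1 : ∑ z, pZ z = 1)
    (qZ : α → ℝ) (hqZ0 : ∀ z, 0 ≤ qZ z) (hqZ1 : ∑ z, qZ z = 1)
    (Λ : α → α → ℝ) (Λmax : ℝ)
    (hΛ0 : ∀ i j, 0 ≤ Λ i j) (hΛmax : ∀ i j, Λ i j ≤ Λmax)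
    (XB : (α → ℝ) → α)
    (hXB : ∀ v : α → ℝ, ∀ j : α, ∑ i, Λ i (XB v) * v i ≤ ∑ i, Λ i j * v i) :
    ∑ x : α, ∑ z : α, (Matrix.mulVec (K⁻¹)ᵀ pZ x * K x z) *
        (Λ x (hadFilter K XB qZ z) - Λ x (hadFilter K XB pZ z))
      ≤ Λmax * matMaxAbs (K⁻¹)ᵀ * (Fintype.card α : ℝ) * ∑ z, |pZ z - qZ z| :=
  mismatched_filter_single_letter_bound_general K hK0 hKrow pZ qZ Λ Λmax hΛ0 hΛmax XB hXB
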